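/- Let H be a Hilbert space and (T_k)_{k∈ℤ} a family of bounded linear operators on H, all but finitely many zero, satisfying for all i,k: ‖T_i* T_k‖ ≤ C²·ω(i−k) and ‖T_i T_k*‖ ≤ C²·ω(i−k), where ω : ℤ → [0,∞) satisfies A := ∑_{n∈ℤ} ω(n)^(1/2) < ∞. Then ‖∑_k T_k‖ ≤ C·A. -/

import Mathlib

/-!
Write `S = ∑ Tᵢ` and suppose `‖Tᵢ⋆ Tⱼ‖ ≤ a(i,j)²`, `‖Tᵢ Tⱼ⋆‖ ≤ b(i,j)²`, with all row sums of `a`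
and `b` at most `A` (for the theorem, `a = b = C √ω(i - j)`). By the C*-identity
`‖S‖^(2N) = ‖(S⋆S)^N‖` for `N` a power of two, and `(S⋆S)^N` expands into words
`Tᵢ₁⋆ Tⱼ₁ ⋯ Tᵢₙ⋆ Tⱼₙ`. Grouping a word as `(Tᵢ₁⋆ Tⱼ₁)⋯(Tᵢₙ⋆ Tⱼₙ)` bounds its norm by
`∏ a(iₖ,jₖ)²`, grouping it as `Tᵢ₁⋆ (Tⱼ₁ Tᵢ₂⋆)⋯(Tⱼₙ₋₁ Tᵢₙ⋆) Tⱼₙ` by `A² ∏ b(jₖ,iₖ₊₁)²`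
(as `‖Tᵢ‖ ≤ a(i,i) ≤ A`). The geometric mean `A a(i₁,j₁) b(j₁,i₂) a(i₂,j₂) ⋯` is a product
along the chain `i₁, j₁, …, jₙ`, and summing over chains one step at a time gives
`‖S‖^(2N) ≤ #ι · A^(2N)`; letting `N → ∞` removes the factor `#ι`.
-/

open Finset Filter Topology

theorem Fin.sum_univ_fun_succ {κ M : Type*} [Fintype κ] [AddCommMonoid M] {n : ℕ}
    (f : (Fin (n + 1) → κ) → M) : ∑ g, f g = ∑ x, ∑ g : Fin n → κ, f (Fin.cons x g) := by
  rw [← Fintype.sum_prod_type']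
  exact (Fintype.sum_equiv (Fin.consEquiv fun _ => κ) _ _ fun _ => rfl).symm

theorem sum_pow_eq_sum_prod_ofFn {R ι : Type*} [Semiring R] [Fintype ι] (f : ι → R) (n : ℕ) :
    (∑ i, f i) ^ n = ∑ g : Fin n → ι, (List.ofFn fun r => f (g r)).prod := by
  induction n with
  | zero => simp
  | succ n ih =>
    rw [pow_succ', ih, Finset.sum_mul_sum, Fin.sum_univ_fun_succ]
    simp [List.ofFn_succ]

theorem List.prod_ofFn_mul_eq_mul_prod_ofFn_mul {M : Type*} [Monoid M] {n : ℕ}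
    (a b : Fin (n + 1) → M) :
    (List.ofFn fun r => a r * b r).prod =
      a 0 * (List.ofFn fun r : Fin n => b r.castSucc * a r.succ).prod * b (Fin.last n) := by
  induction n with
  | zero => simp
  | succ n ih =>
    rw [List.ofFn_succ', List.prod_concat, ih (fun r => a r.castSucc) (fun r => b r.castSucc),
      List.ofFn_succ' (fun r : Fin (n + 1) => b r.castSucc * a r.succ), List.prod_concat]
    simp [mul_assoc]

theorem sum_mul_prod_chain_le {κ : Type*} [Fintype κ] {t : κ → κ → ℝ} (ht : ∀ x y, 0 ≤ t x y)
    {M : ℝ} (hM₀ : 0 ≤ M) (hM : ∀ x, ∑ y, t x y ≤ M) (n : ℕ) {u : κ → ℝ} (hu : ∀ x, 0 ≤ u x) :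
    ∑ g : Fin (n + 1) → κ, u (g 0) * ∏ r : Fin n, t (g r.castSucc) (g r.succ) ≤
      (∑ x, u x) * M ^ n := by
  induction n generalizing u with
  | zero => simp [Fin.sum_univ_fun_succ]
  | succ n ih =>
    calc ∑ g : Fin (n + 2) → κ, u (g 0) * ∏ r : Fin (n + 1), t (g r.castSucc) (g r.succ)
        = ∑ x, u x * ∑ g : Fin (n + 1) → κ,
            t x (g 0) * ∏ r : Fin n, t (g r.castSucc) (g r.succ) := by
          simp [Fin.sum_univ_fun_succ, Fin.prod_univ_succ, mul_sum]
      _ ≤ ∑ x, u x * ((∑ y, t x y) * M ^ n) :=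
          sum_le_sum fun x _ => mul_le_mul_of_nonneg_left (ih (ht x)) (hu x)
      _ ≤ ∑ x, u x * (M * M ^ n) := by gcongr with x; exacts [hu x, hM x]
      _ = (∑ x, u x) * M ^ (n + 1) := by rw [sum_mul, pow_succ']

theorem le_of_frequently_pow_le_mul_pow {x y D : ℝ} (hy : 0 ≤ y)
    (h : ∃ᶠ n : ℕ in atTop, x ^ n ≤ D * y ^ n) : x ≤ y := by
  by_contra! hxy
  have hx : 0 < x := hy.trans_lt hxy
  have hlim : Tendsto (fun n : ℕ => D * (y / x) ^ n) atTop (𝓝 0) := by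
    simpa using (tendsto_pow_atTop_nhds_zero_of_lt_one (div_nonneg hy hx.le)
      ((div_lt_one hx).2 hxy)).const_mul D
  obtain ⟨n, hn, hlt⟩ := (h.and_eventually (hlim.eventually (gt_mem_nhds one_pos))).exists
  rw [div_pow, ← mul_div_assoc, div_lt_one (pow_pos hx n)] at hlt
  exact hlt.not_ge hn

theorem sum_le_of_hasSum_sub {G : Type*} [AddGroup G] {f : G → ℝ} {A : ℝ} (hf : ∀ n, 0 ≤ f n)
    (hA : HasSum f A) (s : Finset G) (i : G) : ∑ j ∈ s, f (i - j) ≤ A :=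
  sum_le_hasSum s (fun _ _ => hf _) ((Equiv.subLeft i).hasSum_iff.2 hA)

theorem norm_mul_list_prod_le {R : Type*} [SeminormedRing R] (x : R) (l : List R) :
    ‖x * l.prod‖ ≤ ‖x‖ * (l.map norm).prod := by
  simpa using List.norm_prod_le' (List.cons_ne_nil x l)

section CStarRing

variable {E : Type*} [NormedRing E] [StarRing E] [CStarRing E]

theorem norm_le_of_norm_star_mul_self_le {x : E} {c : ℝ} (hc : 0 ≤ c)
    (h : ‖star x * x‖ ≤ c ^ 2) : ‖x‖ ≤ c :=
  le_of_pow_le_pow_left₀ two_ne_zero hc (by rwa [sq, ← CStarRing.norm_star_mul_self])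

variable {ι : Type*} {T : ι → E} {a b : ι → ι → ℝ}

theorem norm_prod_ofFn_star_mul_le (ha : ∀ i j, 0 ≤ a i j) (hb : ∀ i j, 0 ≤ b i j) {K : ℝ}
    (hK : 0 ≤ K) (hT : ∀ i, ‖T i‖ ≤ K) (hTT : ∀ i j, ‖star (T i) * T j‖ ≤ a i j ^ 2)
    (hTT' : ∀ i j, ‖T i * star (T j)‖ ≤ b i j ^ 2) {n : ℕ} (g : Fin (n + 1) → ι × ι) :
    ‖(List.ofFn fun r => star (T (g r).1) * T (g r).2).prod‖ ≤
      K * a (g 0).1 (g 0).2 *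
        ∏ r : Fin n, (b (g r.castSucc).2 (g r.succ).1 * a (g r.succ).1 (g r.succ).2) := by
  set w := (List.ofFn fun r => star (T (g r).1) * T (g r).2).prod with hw
  have hpairs : ‖w‖ ≤ a (g 0).1 (g 0).2 ^ 2 * ∏ r : Fin n, a (g r.succ).1 (g r.succ).2 ^ 2 := by
    rw [hw, List.ofFn_succ, List.prod_cons]
    refine (norm_mul_list_prod_le _ _).trans ?_
    simp only [List.map_ofFn, List.prod_ofFn, Function.comp_apply]
    gcongr <;> apply hTT
  have hlinks : ‖w‖ ≤ K * (∏ r : Fin n, b (g r.castSucc).2 (g r.succ).1 ^ 2) * K := by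
    rw [hw, List.prod_ofFn_mul_eq_mul_prod_ofFn_mul (fun r => star (T (g r).1))
      (fun r => T (g r).2)]
    refine (norm_mul_le _ _).trans ?_
    gcongr
    · refine (norm_mul_list_prod_le _ _).trans ?_
      simp only [List.map_ofFn, List.prod_ofFn, Function.comp_apply, norm_star]
      gcongr
      exacts [hT _, hTT' _ _]
    · exact hT _
  refine le_of_pow_le_pow_left₀ two_ne_zero
    (mul_nonneg (mul_nonneg hK (ha _ _)) (prod_nonneg fun r _ => mul_nonneg (hb _ _) (ha _ _))) ?_
  calc ‖w‖ ^ 2 = ‖w‖ * ‖w‖ := sq _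
    _ ≤ (a (g 0).1 (g 0).2 ^ 2 * ∏ r : Fin n, a (g r.succ).1 (g r.succ).2 ^ 2) *
        (K * (∏ r : Fin n, b (g r.castSucc).2 (g r.succ).1 ^ 2) * K) :=
      mul_le_mul hpairs hlinks (norm_nonneg _) (by positivity)
    _ = _ := by simp only [mul_pow, ← prod_pow, prod_mul_distrib]; ring

variable [Fintype ι] {A : ℝ}

theorem norm_star_mul_self_sum_pow_succ_le (ha : ∀ i j, 0 ≤ a i j) (hb : ∀ i j, 0 ≤ b i j)
    (hA : 0 ≤ A) (hTT : ∀ i j, ‖star (T i) * T j‖ ≤ a i j ^ 2)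
    (hTT' : ∀ i j, ‖T i * star (T j)‖ ≤ b i j ^ 2) (ha_sum : ∀ i, ∑ j, a i j ≤ A)
    (hb_sum : ∀ i, ∑ j, b i j ≤ A) (n : ℕ) :
    ‖(star (∑ i, T i) * ∑ i, T i) ^ (n + 1)‖ ≤ Fintype.card ι * A ^ (2 * (n + 1)) := by
  have hT : ∀ i, ‖T i‖ ≤ A := fun i =>
    (norm_le_of_norm_star_mul_self_le (ha i i) (hTT i i)).trans
      ((single_le_sum (fun j _ => ha i j) (mem_univ i)).trans (ha_sum i))
  have hexpand : star (∑ i, T i) * ∑ i, T i = ∑ p : ι × ι, star (T p.1) * T p.2 := by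
    rw [star_sum, sum_mul_sum, ← Fintype.sum_prod_type']
  have hinit : ∑ p : ι × ι, A * a p.1 p.2 ≤ A * (Fintype.card ι * A) := by
    rw [← mul_sum, Fintype.sum_prod_type']
    gcongr
    simpa using sum_le_sum fun i (_ : i ∈ univ) => ha_sum i
  have hstep : ∀ p : ι × ι, ∑ q : ι × ι, b p.2 q.1 * a q.1 q.2 ≤ A ^ 2 := fun p => by
    simp only [Fintype.sum_prod_type, ← mul_sum]
    calc ∑ j, b p.2 j * ∑ k, a j k ≤ ∑ j, b p.2 j * A :=
          sum_le_sum fun j _ => mul_le_mul_of_nonneg_left (ha_sum j) (hb _ _)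
      _ ≤ A ^ 2 := by rw [← sum_mul, sq]; exact mul_le_mul_of_nonneg_right (hb_sum _) hA
  calc ‖(star (∑ i, T i) * ∑ i, T i) ^ (n + 1)‖
      ≤ ∑ g : Fin (n + 1) → ι × ι, ‖(List.ofFn fun r => star (T (g r).1) * T (g r).2).prod‖ := by
        rw [hexpand, sum_pow_eq_sum_prod_ofFn]
        exact norm_sum_le _ _
    _ ≤ ∑ g : Fin (n + 1) → ι × ι, A * a (g 0).1 (g 0).2 *
          ∏ r : Fin n, (b (g r.castSucc).2 (g r.succ).1 * a (g r.succ).1 (g r.succ).2) :=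
        sum_le_sum fun g _ => norm_prod_ofFn_star_mul_le ha hb hA hT hTT hTT' g
    _ ≤ (∑ p : ι × ι, A * a p.1 p.2) * (A ^ 2) ^ n :=
        sum_mul_prod_chain_le (fun _ _ => mul_nonneg (hb _ _) (ha _ _)) (sq_nonneg A) hstep n
          (fun _ => mul_nonneg hA (ha _ _))
    _ ≤ A * (Fintype.card ι * A) * (A ^ 2) ^ n := by gcongr
    _ = Fintype.card ι * A ^ (2 * (n + 1)) := by ring

theorem norm_sum_le_of_almost_orthogonal (ha : ∀ i j, 0 ≤ a i j) (hb : ∀ i j, 0 ≤ b i j)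
    (hA : 0 ≤ A) (hTT : ∀ i j, ‖star (T i) * T j‖ ≤ a i j ^ 2)
    (hTT' : ∀ i j, ‖T i * star (T j)‖ ≤ b i j ^ 2) (ha_sum : ∀ i, ∑ j, a i j ≤ A)
    (hb_sum : ∀ i, ∑ j, b i j ≤ A) : ‖∑ i, T i‖ ≤ A := by
  set S := ∑ i, T i
  refine le_of_frequently_pow_le_mul_pow hA (D := Fintype.card ι) ?_
  refine frequently_atTop.2 fun m => ⟨2 * 2 ^ m, by linarith [m.lt_two_pow_self], ?_⟩
  obtain ⟨n, hn⟩ : ∃ n, 2 ^ m = n + 1 := Nat.exists_eq_add_one.2 (Nat.two_pow_pos m)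
  calc ‖S‖ ^ (2 * 2 ^ m) = ‖(star S * S) ^ 2 ^ m‖ := by
        rw [(IsSelfAdjoint.star_mul_self S).norm_pow_two_pow, CStarRing.norm_star_mul_self, ← sq,
          pow_mul]
    _ ≤ Fintype.card ι * A ^ (2 * 2 ^ m) := by
        rw [hn]
        exact norm_star_mul_self_sum_pow_succ_le ha hb hA hTT hTT' ha_sum hb_sum n

end CStarRing

/-- Cotlar–Stein almost orthogonality lemma: if a finitely supported family of
bounded operators `T k` on a Hilbert space satisfies `‖T i * T k‖, ‖T i T k*‖ ≤ C² ω(i-k)`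
with `A = ∑ ω(n)^(1/2) < ∞`, then `‖∑ T k‖ ≤ C A`. -/
theorem stmt_1 {H : Type*} [NormedAddCommGroup H] [InnerProductSpace ℂ H] [CompleteSpace H]
    (T : ℤ → H →L[ℂ] H) (hfin : Set.Finite (Function.support T))
    (ω : ℤ → ℝ) (hω : ∀ n, 0 ≤ ω n) (C A : ℝ) (hC : 0 ≤ C)
    (hA : HasSum (fun n : ℤ => (ω n) ^ ((1 : ℝ) / 2)) A)
    (h1 : ∀ i k : ℤ, ‖(ContinuousLinearMap.adjoint (T i)).comp (T k)‖ ≤ C ^ 2 * ω (i - k))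
    (h2 : ∀ i k : ℤ, ‖(T i).comp (ContinuousLinearMap.adjoint (T k))‖ ≤ C ^ 2 * ω (i - k)) :
    ‖∑ᶠ k, T k‖ ≤ C * A := by
  have hsqrt : HasSum (fun n => √(ω n)) A := by simpa only [Real.sqrt_eq_rpow] using hA
  have hsq : ∀ i k : ℤ, (C * √(ω (i - k))) ^ 2 = C ^ 2 * ω (i - k) := fun i k => by
    rw [mul_pow, Real.sq_sqrt (hω _)]
  have hrow : ∀ i : ℤ, ∑ k : hfin.toFinset, C * √(ω (i - k)) ≤ C * A := fun i => by
    rw [← mul_sum, sum_coe_sort hfin.toFinset fun k => √(ω (i - k))]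
    exact mul_le_mul_of_nonneg_left
      (sum_le_of_hasSum_sub (fun _ => Real.sqrt_nonneg _) hsqrt _ i) hC
  rw [finsum_eq_sum T hfin, ← sum_coe_sort]
  refine norm_sum_le_of_almost_orthogonal (a := fun i k : hfin.toFinset => C * √(ω (i - k)))
    (b := fun i k : hfin.toFinset => C * √(ω (i - k))) (fun _ _ => by positivity)
    (fun _ _ => by positivity) (mul_nonneg hC (hsqrt.nonneg fun _ => Real.sqrt_nonneg _))
    (fun i k => ?_) (fun i k => ?_) (fun i => hrow i) (fun i => hrow i)
  · rw [hsq]; exact h1 i k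
  · rw [hsq]; exact h2 i k
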